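/- arXiv:2306.14779 — 8 statements merged into one kernel-verified Lean document; each statement's English description precedes it below -/
import Mathlib

section
/- For every natural number n there exists a finite set F of clauses over n Boolean variables with cardinality exactly 3^n - 2^n and an assignment a : Fin n → Bool satisfying every clause of F; hence the bound 3^n - 2^n in the final point of satisfiability is attained. -/
/-!
The clauses satisfied by a fixed assignment `a` attain the bound: a clause fails `a` exactly
when each of its entries is `none` or `some (!a i)`, so `2 ^ n` of the `3 ^ n` functions
`Fin n → Option Bool` fail `a`, and none of the remaining ones is identically `none`.
-/

open Finset

section

variable {ι : Type*} [Fintype ι] [DecidableEq ι]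

theorem filter_not_satisfied_eq_piFinset (a : ι → Bool) :
    univ.filter (fun c : ι → Option Bool => ¬∃ i, c i = some (a i)) =
      Fintype.piFinset fun i => {none, some (!a i)} := by
  ext c
  simp only [mem_filter, mem_univ, true_and, not_exists, Fintype.mem_piFinset, mem_insert,
    mem_singleton]
  refine forall_congr' fun i => ?_
  generalize c i = x, a i = y
  revert x y
  decide

theorem card_filter_satisfied (a : ι → Bool) :
    #(univ.filter fun c : ι → Option Bool => ∃ i, c i = some (a i)) =
      3 ^ Fintype.card ι - 2 ^ Fintype.card ι := by
  have hfalsified : #(univ.filter fun c : ι → Option Bool => ¬∃ i, c i = some (a i)) =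
      2 ^ Fintype.card ι := by
    rw [filter_not_satisfied_eq_piFinset, Fintype.card_piFinset]
    simp
  have hsplit := card_filter_add_card_filter_not (s := univ)
    (fun c : ι → Option Bool => ∃ i, c i = some (a i))
  rw [hfalsified, card_univ, Fintype.card_fun, Fintype.card_option, Fintype.card_bool] at hsplit
  norm_num at hsplit
  omega

end

/-- The bound `3^n - 2^n` (final point of satisfiability) is attained: there is a
finite set of clauses over `n` variables of that cardinality that is satisfiable. -/
theorem final_point_attained (n : ℕ) :
    ∃ F : Finset (Fin n → Option Bool),
      (∀ c ∈ F, c ≠ fun _ => none) ∧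
      F.card = 3 ^ n - 2 ^ n ∧
      ∃ a : Fin n → Bool, ∀ c ∈ F, ∃ i, c i = some (a i) := by
  let a : Fin n → Bool := fun _ => true
  refine ⟨univ.filter fun c => ∃ i, c i = some (a i), ?_, ?_, a, fun c hc => (mem_filter.1 hc).2⟩
  · rintro c hc rfl
    obtain ⟨i, hi⟩ := (mem_filter.1 hc).2
    cases hi
  · convert card_filter_satisfied a <;> simp
end

section
/- Let n ≥ 1 and let a, b : Fin n → Bool be any two distinct truth assignments. Then the number of clauses over n Boolean variables that are satisfied by both a and b is at most 3^n - 2^n - 2^(n-1). -/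
/-!
A clause is satisfied by an assignment `v` unless every position avoids the literal `some (v i)`,
so exactly `2 ^ n` of the `3 ^ n` functions `Fin n → Option Bool` are not satisfied by `v`.
By inclusion–exclusion the functions satisfied by both `a` and `b` number
`3 ^ n - 2 * 2 ^ n + N`, where `N` counts those avoiding both literals everywhere. At a position
`j` with `a j ≠ b j` only `none` avoids both, so `N ≤ 2 ^ (n - 1)`.
-/

open Finset

theorem Finset.prod_le_pow_card_sub_one {ι M : Type*} [Fintype ι] [CommMonoid M] [PartialOrder M]
    [IsOrderedMonoid M] {f : ι → M} {m : M} (hf : ∀ i, f i ≤ m) {j : ι} (hj : f j ≤ 1) :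
    ∏ i, f i ≤ m ^ (Fintype.card ι - 1) := by
  classical
  rw [← mul_prod_erase univ f (mem_univ j), ← card_univ, ← card_erase_of_mem (mem_univ j),
    ← one_mul (m ^ _)]
  exact mul_le_mul' hj (prod_le_pow_card _ _ _ fun i _ => hf i)

section Clauses

variable {ι : Type*} [Fintype ι] [DecidableEq ι]

theorem card_filter_forall_ne_some (v : ι → Bool) :
    #{c : ι → Option Bool | ∀ i, c i ≠ some (v i)} = 2 ^ Fintype.card ι := by
  rw [← Fintype.card_subtype,
    Fintype.card_congr (Equiv.subtypePiEquivPi (p := fun i x => x ≠ some (v i))),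
    Fintype.card_pi]
  have h2 (i : ι) : Fintype.card {x : Option Bool // x ≠ some (v i)} = 2 := by
    cases v i <;> rfl
  simp [h2]

theorem card_filter_forall_ne_some_and_ne_some_le {a b : ι → Bool} (hab : a ≠ b) :
    #{c : ι → Option Bool | ∀ i, c i ≠ some (a i) ∧ c i ≠ some (b i)}
      ≤ 2 ^ (Fintype.card ι - 1) := by
  obtain ⟨j, hj⟩ := Function.ne_iff.mp hab
  rw [← Fintype.card_subtype,
    Fintype.card_congr
      (Equiv.subtypePiEquivPi (p := fun i x => x ≠ some (a i) ∧ x ≠ some (b i))),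
    Fintype.card_pi]
  refine prod_le_pow_card_sub_one (fun i => ?_) (j := j) ?_
  · cases a i <;> cases b i <;> decide
  · revert hj
    cases a j <;> cases b j <;> decide

theorem card_filter_exists_eq_some_and_exists_eq_some_add (a b : ι → Bool) :
    #{c : ι → Option Bool | (∃ i, c i = some (a i)) ∧ ∃ i, c i = some (b i)}
        + 2 * 2 ^ Fintype.card ι
      = 3 ^ Fintype.card ι
        + #{c : ι → Option Bool | ∀ i, c i ≠ some (a i) ∧ c i ≠ some (b i)} := by
  set A := ({c : ι → Option Bool | ∀ i, c i ≠ some (a i)} : Finset _)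
  set B := ({c : ι → Option Bool | ∀ i, c i ≠ some (b i)} : Finset _)
  have hboth :
      ({c : ι → Option Bool | (∃ i, c i = some (a i)) ∧ ∃ i, c i = some (b i)} : Finset _)
        = (A ∪ B)ᶜ := by
    ext c
    simp [A, B]
  have hneither :
      ({c : ι → Option Bool | ∀ i, c i ≠ some (a i) ∧ c i ≠ some (b i)} : Finset _)
        = A ∩ B := by
    simp only [A, B, forall_and, filter_and]
  have hcard : Fintype.card (ι → Option Bool) = 3 ^ Fintype.card ι := by simp
  have hA : #A = 2 ^ Fintype.card ι := card_filter_forall_ne_some a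
  have hB : #B = 2 ^ Fintype.card ι := card_filter_forall_ne_some b
  have hunion := card_union_add_card_inter A B
  have hle := card_le_univ (A ∪ B)
  rw [hboth, hneither, card_compl, hcard]
  omega

theorem card_filter_exists_eq_some_and_exists_eq_some_le {a b : ι → Bool} (hab : a ≠ b) :
    #{c : ι → Option Bool | (∃ i, c i = some (a i)) ∧ ∃ i, c i = some (b i)}
      ≤ 3 ^ Fintype.card ι - 2 ^ Fintype.card ι - 2 ^ (Fintype.card ι - 1) := by
  obtain ⟨j, -⟩ := Function.ne_iff.mp hab
  have hpow : 2 ^ Fintype.card ι = 2 * 2 ^ (Fintype.card ι - 1) := by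
    rw [← pow_succ', Nat.sub_add_cancel (Fintype.card_pos_iff.mpr ⟨j⟩)]
  have hcount := card_filter_exists_eq_some_and_exists_eq_some_add a b
  have hneither := card_filter_forall_ne_some_and_ne_some_le hab
  rw [Nat.sub_sub]
  exact Nat.le_sub_of_add_le (by linarith)

end Clauses

theorem doubly_satisfied_count_le_general (n : ℕ) (a b : Fin n → Bool)
    (hab : a ≠ b) :
    Fintype.card {c : Fin n → Option Bool //
      c ≠ (fun _ => none) ∧ (∃ i, c i = some (a i)) ∧ (∃ i, c i = some (b i))}
      ≤ 3 ^ n - 2 ^ n - 2 ^ (n - 1) := by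
  calc _ ≤ Fintype.card {c : Fin n → Option Bool //
        (∃ i, c i = some (a i)) ∧ ∃ i, c i = some (b i)} :=
        Fintype.card_subtype_mono _ _ fun _ hc => hc.2
    _ ≤ 3 ^ n - 2 ^ n - 2 ^ (n - 1) := by
        convert card_filter_exists_eq_some_and_exists_eq_some_le hab using 1
        · rw [Fintype.card_subtype]
          congr
        · rw [Fintype.card_fin]

/-- For any two distinct assignments `a ≠ b` over `n ≥ 1` variables, the number of
clauses satisfied by both is at most `3^n - 2^n - 2^(n-1)`. -/
theorem doubly_satisfied_count_le (n : ℕ) (hn : 1 ≤ n) (a b : Fin n → Bool)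
    (hab : a ≠ b) :
    Fintype.card {c : Fin n → Option Bool //
      c ≠ (fun _ => none) ∧ (∃ i, c i = some (a i)) ∧ (∃ i, c i = some (b i))}
      ≤ 3 ^ n - 2 ^ n - 2 ^ (n - 1) :=
  doubly_satisfied_count_le_general n a b hab
end

section
/- Let n ≥ 1 and let a, b : Fin n → Bool be two truth assignments that differ in exactly k variables (the set {i : a i ≠ b i} has cardinality k, with k ≥ 1). Then the number of clauses over n Boolean variables satisfied by both a and b is exactly 3^n - 2^(n+1) + 2^(n-k). -/
/-! A clause satisfied by both `a` and `b` is one that is falsified by neither. A clause is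
falsified by an assignment iff each of its positions carries `none` or the negated value, and it is
falsified by both `a` and `b` iff each position avoids both `some (a i)` and `some (b i)`: two
choices where `a` and `b` agree, one (`none`) where they differ. Inclusion–exclusion over the
`3 ^ n` functions `Fin n → Option Bool` then gives `3 ^ n - 2 ^ n - 2 ^ n + 2 ^ (n - k)`; the
all-`none` function is falsified by everything, so the clause condition costs nothing. -/

open Finset

theorem Finset.card_filter_not_and_not {α : Type*} [Fintype α] (p q : α → Prop)
    [DecidablePred p] [DecidablePred q] :
    (#{x | ¬p x ∧ ¬q x} : ℤ) = Fintype.card α - #{x | p x} - #{x | q x} + #{x | p x ∧ q x} := by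
  classical
  have hunion := card_union_add_card_inter {x | p x} {x | q x}
  rw [← filter_or, ← filter_and] at hunion
  have hcompl := card_filter_add_card_filter_not (s := univ) (fun x => p x ∨ q x)
  simp only [not_or, card_univ] at hcompl
  omega

section Clauses

variable {ι : Type*} [Fintype ι] [DecidableEq ι]

theorem card_filter_ne_some_and_ne_some (x y : Bool) :
    #{o : Option Bool | o ≠ some x ∧ o ≠ some y} = if x = y then 2 else 1 := by
  cases x <;> cases y <;> decide

theorem card_falsifying_both (a b : ι → Bool) :
    #{c : ι → Option Bool | ∀ i, c i ≠ some (a i) ∧ c i ≠ some (b i)}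
      = 2 ^ #{i | a i = b i} := by
  have hpi : ({c : ι → Option Bool | ∀ i, c i ≠ some (a i) ∧ c i ≠ some (b i)} : Finset _)
      = Fintype.piFinset fun i => {o | o ≠ some (a i) ∧ o ≠ some (b i)} := by
    ext c
    simp [Fintype.mem_piFinset]
  rw [hpi, Fintype.card_piFinset]
  simp only [card_filter_ne_some_and_ne_some]
  rw [prod_ite, prod_const, prod_const, one_pow, mul_one]

theorem card_falsifying (a : ι → Bool) :
    #{c : ι → Option Bool | ∀ i, c i ≠ some (a i)} = 2 ^ Fintype.card ι := by
  simpa using card_falsifying_both a a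

theorem card_satisfying_both (a b : ι → Bool) :
    (#{c : ι → Option Bool | (∃ i, c i = some (a i)) ∧ ∃ i, c i = some (b i)} : ℤ)
      = 3 ^ Fintype.card ι - 2 * 2 ^ Fintype.card ι + 2 ^ #{i | a i = b i} := by
  have h := card_filter_not_and_not (fun c : ι → Option Bool => ∀ i, c i ≠ some (a i))
    (fun c => ∀ i, c i ≠ some (b i))
  simp only [not_forall, not_not, ← forall_and] at h
  rw [h, card_falsifying, card_falsifying, card_falsifying_both, Fintype.card_fun]
  push_cast
  simp only [Fintype.card_option, Fintype.card_bool]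
  ring

end Clauses

theorem doubly_satisfied_count_general_general (n k : ℕ)
    (a b : Fin n → Bool)
    (hab : (Finset.univ.filter fun i : Fin n => a i ≠ b i).card = k) :
    (Fintype.card {c : Fin n → Option Bool //
      c ≠ (fun _ => none) ∧ (∃ i, c i = some (a i)) ∧ (∃ i, c i = some (b i))} : ℤ)
      = 3 ^ n - 2 ^ (n + 1) + 2 ^ (n - k) := by
  have hagree : #{i : Fin n | a i = b i} = n - k := by
    have := card_filter_add_card_filter_not (s := univ) fun i : Fin n => a i = b i
    rw [card_univ, Fintype.card_fin] at this
    simp only [ne_eq] at hab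
    omega
  have hnone : ∀ c : Fin n → Option Bool, (∃ i, c i = some (a i)) → c ≠ fun _ => none := by
    rintro c ⟨i, hi⟩ rfl
    simp at hi
  have hcount := card_satisfying_both a b
  rw [Fintype.card_fin, hagree] at hcount
  rw [Fintype.card_subtype, filter_congr fun c _ => and_iff_right_of_imp fun h => hnone c h.1,
    pow_succ, mul_comm _ 2]
  -- the two sides differ only in their `Decidable` instances
  convert hcount

/-- If two assignments `a`, `b` over `n ≥ 1` variables differ in exactly `k ≥ 1`
variables, then the number of clauses satisfied by both is exactly
`3^n - 2^(n+1) + 2^(n-k)` (as an integer). -/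
theorem doubly_satisfied_count_general (n k : ℕ) (hn : 1 ≤ n) (hk : 1 ≤ k)
    (a b : Fin n → Bool)
    (hab : (Finset.univ.filter fun i : Fin n => a i ≠ b i).card = k) :
    (Fintype.card {c : Fin n → Option Bool //
      c ≠ (fun _ => none) ∧ (∃ i, c i = some (a i)) ∧ (∃ i, c i = some (b i))} : ℤ)
      = 3 ^ n - 2 ^ (n + 1) + 2 ^ (n - k) :=
  doubly_satisfied_count_general_general n k a b hab
end

section
/- Let n ≥ 1 and let F be a finite set of clauses over n Boolean variables. If the cardinality of F is strictly greater than 3^n - 2^n - 2^(n-1), then F has at most one satisfying truth assignment: any two assignments a, b : Fin n → Bool each satisfying every clause of F must be equal. -/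
/-!
Two distinct assignments `a ≠ b` each falsify exactly `2^n` clauses (every coordinate of the
clause must avoid one literal), and they falsify `2^k` clauses in common, where `k < n` is the
number of coordinates on which they agree. By inclusion–exclusion at least
`2^n + 2^n - 2^(n-1)` of the `3^n` clauses are falsified by `a` or by `b`, so at most
`3^n - 2^n - 2^(n-1)` clauses are satisfied by both.
-/

open Finset Fintype

variable {ι : Type*} [Fintype ι] [DecidableEq ι]

def falsifiedClauses (a : ι → Bool) : Finset (ι → Option Bool) :=
  piFinset fun i => {some (a i)}ᶜ

lemma mem_falsifiedClauses {a : ι → Bool} {c : ι → Option Bool} :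
    c ∈ falsifiedClauses a ↔ ¬∃ i, c i = some (a i) := by
  simp [falsifiedClauses]

lemma card_falsifiedClauses (a : ι → Bool) : #(falsifiedClauses a) = 2 ^ card ι := by
  simp [falsifiedClauses, card_compl]

lemma card_compl_singleton_inter_compl_singleton (u v : Bool) :
    #(({some u}ᶜ ∩ {some v}ᶜ : Finset (Option Bool))) = if u = v then 2 else 1 := by
  cases u <;> cases v <;> decide

lemma card_falsifiedClauses_inter (a b : ι → Bool) :
    #(falsifiedClauses a ∩ falsifiedClauses b) = 2 ^ #{i | a i = b i} := by
  rw [falsifiedClauses, falsifiedClauses, ← piFinset_inter, card_piFinset]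
  simp [card_compl_singleton_inter_compl_singleton, prod_ite]

lemma card_inter_compl_falsifiedClauses_le {a b : ι → Bool} (hab : a ≠ b) :
    #((falsifiedClauses a)ᶜ ∩ (falsifiedClauses b)ᶜ) ≤
      3 ^ card ι - 2 ^ card ι - 2 ^ (card ι - 1) := by
  set A := falsifiedClauses a
  set B := falsifiedClauses b
  have h_agree : #{i | a i = b i} < card ι := by
    obtain ⟨i, hi⟩ := Function.ne_iff.mp hab
    exact card_lt_card (filter_ssubset.mpr ⟨i, mem_univ i, hi⟩)
  have h_inter : #(A ∩ B) ≤ 2 ^ (card ι - 1) :=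
    (card_falsifiedClauses_inter a b).trans_le (Nat.pow_le_pow_right two_pos (by omega))
  have h_pow : 2 ^ card ι = 2 * 2 ^ (card ι - 1) := by
    rw [← pow_succ']; congr 1; omega
  have h_incl_excl := card_union_add_card_inter A B
  rw [card_falsifiedClauses, card_falsifiedClauses] at h_incl_excl
  have h_total : card (ι → Option Bool) = 3 ^ card ι := by simp
  rw [← compl_union, card_compl, h_total]
  omega

theorem at_most_one_sat_of_card_gt_general (n : ℕ)
    (F : Finset (Fin n → Option Bool))
    (hcard : 3 ^ n - 2 ^ n - 2 ^ (n - 1) < F.card) :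
    ∀ a b : Fin n → Bool,
      (∀ c ∈ F, ∃ i, c i = some (a i)) → (∀ c ∈ F, ∃ i, c i = some (b i)) →
      a = b := by
  intro a b ha hb
  by_contra hab
  have hF : F ⊆ (falsifiedClauses a)ᶜ ∩ (falsifiedClauses b)ᶜ := fun c hc => by
    simpa [mem_falsifiedClauses] using ⟨ha c hc, hb c hc⟩
  have h_card := (card_le_card hF).trans (card_inter_compl_falsifiedClauses_le hab)
  rw [Fintype.card_fin] at h_card
  omega

/-- If a finite set `F` of clauses over `n ≥ 1` Boolean variables has more than
`3^n - 2^n - 2^(n-1)` clauses, then `F` has at most one satisfying assignment. -/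
theorem at_most_one_sat_of_card_gt (n : ℕ) (hn : 1 ≤ n)
    (F : Finset (Fin n → Option Bool))
    (hF : ∀ c ∈ F, c ≠ fun _ => none)
    (hcard : 3 ^ n - 2 ^ n - 2 ^ (n - 1) < F.card) :
    ∀ a b : Fin n → Bool,
      (∀ c ∈ F, ∃ i, c i = some (a i)) → (∀ c ∈ F, ∃ i, c i = some (b i)) →
      a = b :=
  at_most_one_sat_of_card_gt_general n F hcard
end

section
/- For every natural number n ≥ 2 there exists a finite set F of clauses over n Boolean variables with cardinality exactly 3^n - 2^n - 2^(n-1) together with two distinct assignments a ≠ b, each satisfying every clause of F; hence the bound in the last point of double satisfiability is attained. -/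
/-!
Take `a` constantly `false` and `b` differing from it in one coordinate. A clause is falsified
by an assignment `a` iff every `c i` avoids `some (a i)`, so each assignment falsifies `2^n` of the
`3^n` clauses, and both together falsify `2^(n-1)` of them: at the coordinate where they differ
`c i` must be `none`. Inclusion–exclusion leaves `3^n - 2^n - 2^(n-1)` clauses satisfied by both,
and a satisfied clause is never empty.
-/

open Finset

namespace Clause

variable {ι : Type*} [Fintype ι] [DecidableEq ι]

def Satisfies (a : ι → Bool) (c : ι → Option Bool) : Prop := ∃ i, c i = some (a i)

instance (a : ι → Bool) : DecidablePred (Satisfies a) :=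
  fun c => inferInstanceAs (Decidable (∃ i, c i = some (a i)))

omit [Fintype ι] [DecidableEq ι] in
theorem ne_none_of_satisfies {a : ι → Bool} {c : ι → Option Bool} (h : Satisfies a c) :
    c ≠ fun _ => none := by
  rintro rfl
  obtain ⟨i, hi⟩ := h
  simp at hi

theorem filter_not_satisfies (a : ι → Bool) :
    ({c | ¬ Satisfies a c} : Finset (ι → Option Bool)) =
      Fintype.piFinset fun i => {some (a i)}ᶜ := by
  ext c
  simp [Satisfies]

theorem filter_not_satisfies_and_not (a b : ι → Bool) :
    ({c | ¬ Satisfies a c ∧ ¬ Satisfies b c} : Finset (ι → Option Bool)) =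
      Fintype.piFinset fun i => {some (a i), some (b i)}ᶜ := by
  ext c
  simp [Satisfies, forall_and]

theorem card_filter_not_satisfies (a : ι → Bool) :
    #{c | ¬ Satisfies a c} = 2 ^ Fintype.card ι := by
  rw [filter_not_satisfies, Fintype.card_piFinset]
  simp [card_compl]

theorem card_filter_not_satisfies_and_not (a b : ι → Bool) :
    #{c | ¬ Satisfies a c ∧ ¬ Satisfies b c} = 2 ^ #{i | a i = b i} := by
  have hcard : ∀ x y : Bool, #({some x, some y}ᶜ : Finset (Option Bool)) =
      if x = y then 2 else 1 := by decide
  rw [filter_not_satisfies_and_not, Fintype.card_piFinset]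
  simp only [hcard, prod_ite, prod_const_one, prod_const, mul_one]

theorem card_filter_satisfies_and_add (a b : ι → Bool) :
    #{c | Satisfies a c ∧ Satisfies b c} + 2 ^ (Fintype.card ι + 1) =
      3 ^ Fintype.card ι + 2 ^ #{i | a i = b i} := by
  have hcompl := card_filter_add_card_filter_not (s := univ)
    (fun c : ι → Option Bool => Satisfies a c ∧ Satisfies b c)
  have hunion := card_union_add_card_inter ({c | ¬ Satisfies a c} : Finset (ι → Option Bool))
    {c | ¬ Satisfies b c}
  rw [← filter_or, ← filter_and, card_filter_not_satisfies, card_filter_not_satisfies,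
    card_filter_not_satisfies_and_not] at hunion
  simp only [card_univ, Fintype.card_pi, Fintype.card_option, Fintype.card_bool, Nat.reduceAdd,
    prod_const, not_and_or] at hcompl
  rw [pow_succ]
  omega

theorem card_filter_eq_update_not (a : ι → Bool) (i : ι) :
    #{j | a j = Function.update a i (!a i) j} = Fintype.card ι - 1 := by
  have : ({j | a j = Function.update a i (!a i) j} : Finset ι) = univ.erase i := by
    ext j
    by_cases hj : j = i <;> simp [hj, Function.update_of_ne]
  rw [this, card_erase_of_mem (mem_univ i), card_univ]

end Clause

/-- For `n ≥ 2`, the bound `3^n - 2^n - 2^(n-1)` (last point of double satisfiability)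
is attained: there is a finite set of clauses of that cardinality satisfied by two
distinct assignments. -/
theorem double_sat_point_attained (n : ℕ) (hn : 2 ≤ n) :
    ∃ F : Finset (Fin n → Option Bool),
      (∀ c ∈ F, c ≠ fun _ => none) ∧
      F.card = 3 ^ n - 2 ^ n - 2 ^ (n - 1) ∧
      ∃ a b : Fin n → Bool, a ≠ b ∧
        (∀ c ∈ F, ∃ i, c i = some (a i)) ∧ (∀ c ∈ F, ∃ i, c i = some (b i)) := by
  obtain ⟨m, rfl⟩ : ∃ m, n = m + 1 := ⟨n - 1, by omega⟩
  let a : Fin (m + 1) → Bool := fun _ => false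
  let b := Function.update a 0 (!a 0)
  let F : Finset (Fin (m + 1) → Option Bool) := {c | Clause.Satisfies a c ∧ Clause.Satisfies b c}
  have hcard : #F + 2 ^ (m + 1 + 1) = 3 ^ (m + 1) + 2 ^ m := by
    have h := Clause.card_filter_satisfies_and_add a b
    rwa [Clause.card_filter_eq_update_not, Fintype.card_fin, Nat.add_sub_cancel] at h
  refine ⟨F, fun c hc => Clause.ne_none_of_satisfies (mem_filter.1 hc).2.1, ?_, a, b, ?_,
    fun c hc => (mem_filter.1 hc).2.1, fun c hc => (mem_filter.1 hc).2.2⟩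
  · have hpow : 2 ^ (m + 1 + 1) = 2 ^ (m + 1) + 2 ^ m + 2 ^ m := by ring
    rw [Nat.add_sub_cancel]
    omega
  · intro hab
    simpa [b] using congrFun hab 0
end

section
/- Let n ≥ 1, let F be a finite set of clauses over n Boolean variables, and suppose some assignment a : Fin n → Bool satisfies every clause of F. If for some variable index i and polarity b the literal (i, b) appears in exactly 3^(n-1) clauses of F, then the complementary literal (i, ¬b) appears in at most 3^(n-1) - 2^(n-1) clauses of F. -/
/-!
There are exactly `3^(n-1)` clauses containing the literal `(i, b)`, so `F` contains all of them,
in particular the unit clause `(i, b)`; hence a satisfying assignment `a` has `a i = b`.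
A clause of `F` containing `(i, ¬b)` must then be satisfied by `a` at some other variable, which
excludes the `2^(n-1)` clauses containing `(i, ¬b)` that `a` falsifies.
-/

open Finset

namespace Clause

variable {ι β : Type*} [DecidableEq ι]

def unit (i : ι) (b : β) : ι → Option β := fun j => if j = i then some b else none

theorem eq_of_satisfies_unit {a : ι → β} {i : ι} {b : β} (h : ∃ j, unit i b j = some (a j)) :
    a i = b := by
  obtain ⟨j, hj⟩ := h
  by_cases hji : j = i
  · subst hji
    simpa [unit, eq_comm] using hj
  · simp [unit, hji] at hj

variable [Fintype ι] [Fintype β] [DecidableEq β]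

theorem card_filter_apply_eq (i : ι) (v : Option β) :
    #({c | c i = v} : Finset (ι → Option β)) = (Fintype.card β + 1) ^ (Fintype.card ι - 1) := by
  simpa [Fintype.piFinset_univ] using
    Fintype.card_filter_piFinset_const_eq_of_mem (univ : Finset (Option β)) i (mem_univ v)

theorem card_filter_falsified_apply_eq (a : ι → β) (i : ι) {b : β} (hb : b ≠ a i) :
    #({c | (∀ j, c j ≠ some (a j)) ∧ c i = some b} : Finset (ι → Option β)) =
      Fintype.card β ^ (Fintype.card ι - 1) := by
  have hfalsified :
      ({c | (∀ j, c j ≠ some (a j)) ∧ c i = some b} : Finset (ι → Option β)) =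
        {c ∈ Fintype.piFinset fun j => univ.erase (some (a j)) | c i = some b} := by
    ext c
    simp
  rw [hfalsified]
  convert Fintype.card_filter_piFinset_eq_of_mem (fun j => univ.erase (some (a j))) i
    (a := some b) (by simpa using hb)
  simp [card_erase_of_mem]

theorem mem_of_card_filter_apply_eq {F : Finset (ι → Option β)} {i : ι} {v : Option β}
    (hF : #{c ∈ F | c i = v} = (Fintype.card β + 1) ^ (Fintype.card ι - 1))
    {c : ι → Option β} (hc : c i = v) : c ∈ F := by
  have hsub : {c ∈ F | c i = v} ⊆ ({c | c i = v} : Finset (ι → Option β)) :=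
    fun c hc => by simpa using (mem_filter.mp hc).2
  have heq := eq_of_subset_of_card_le hsub (by rw [card_filter_apply_eq, hF])
  have hc' : c ∈ ({c | c i = v} : Finset (ι → Option β)) := by simpa using hc
  exact (mem_filter.mp (heq ▸ hc')).1

theorem card_filter_apply_eq_some_le {F : Finset (ι → Option β)} {a : ι → β}
    (hsat : ∀ c ∈ F, ∃ j, c j = some (a j)) {i : ι} {b b' : β} (hb' : b' ≠ b)
    (hlit : #{c ∈ F | c i = some b} = (Fintype.card β + 1) ^ (Fintype.card ι - 1)) :
    #{c ∈ F | c i = some b'} ≤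
      (Fintype.card β + 1) ^ (Fintype.card ι - 1) - Fintype.card β ^ (Fintype.card ι - 1) := by
  have hai : a i = b :=
    eq_of_satisfies_unit (hsat _ (mem_of_card_filter_apply_eq hlit (by simp [unit])))
  set withLit : Finset (ι → Option β) := {c | c i = some b'}
  set falsified : Finset (ι → Option β) := {c | (∀ j, c j ≠ some (a j)) ∧ c i = some b'}
  have hsub : {c ∈ F | c i = some b'} ⊆ withLit \ falsified := by
    intro c hc
    obtain ⟨hcF, hci⟩ := mem_filter.mp hc
    obtain ⟨j, hj⟩ := hsat c hcF
    simpa [withLit, falsified, hci] using ⟨j, hj⟩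
  calc #{c ∈ F | c i = some b'}
      ≤ #(withLit \ falsified) := card_le_card hsub
    _ = _ := by
      rw [card_sdiff_of_subset (fun c hc => by simp_all [withLit, falsified]),
        card_filter_apply_eq, card_filter_falsified_apply_eq a i (hai ▸ hb')]

end Clause

theorem complementary_literal_bound_general (n : ℕ)
    (F : Finset (Fin n → Option Bool))
    (hsat : ∃ a : Fin n → Bool, ∀ c ∈ F, ∃ i, c i = some (a i))
    (i : Fin n) (b : Bool)
    (hlit : (F.filter fun c => c i = some b).card = 3 ^ (n - 1)) :
    (F.filter fun c => c i = some (!b)).card ≤ 3 ^ (n - 1) - 2 ^ (n - 1) := by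
  obtain ⟨a, ha⟩ := hsat
  simpa using Clause.card_filter_apply_eq_some_le ha (Bool.not_ne_self b) (by simpa using hlit)

/-- In a satisfiable finite set `F` of clauses over `n ≥ 1` variables, if the literal
`(i, b)` appears in exactly `3^(n-1)` clauses of `F`, then its complement `(i, ¬b)`
appears in at most `3^(n-1) - 2^(n-1)` clauses of `F`. -/
theorem complementary_literal_bound (n : ℕ) (hn : 1 ≤ n)
    (F : Finset (Fin n → Option Bool))
    (hF : ∀ c ∈ F, c ≠ fun _ => none)
    (hsat : ∃ a : Fin n → Bool, ∀ c ∈ F, ∃ i, c i = some (a i))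
    (i : Fin n) (b : Bool)
    (hlit : (F.filter fun c => c i = some b).card = 3 ^ (n - 1)) :
    (F.filter fun c => c i = some (!b)).card ≤ 3 ^ (n - 1) - 2 ^ (n - 1) :=
  complementary_literal_bound_general n F hsat i b hlit
end

section
/- For every natural number n and every truth assignment a : Fin n → Bool, and for every variable index i : Fin n, the number of clauses over n Boolean variables that contain variable i (in either polarity) and are satisfied by a is exactly 2·3^(n-1) - 2^(n-1). -/
/-!
A clause containing variable `i` is a point of the box whose side at `i` is `{some false,
some true}` and whose other sides are all of `Option Bool`; it has `2 * 3 ^ (n - 1)` points.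
The clauses in this box not satisfied by `a` are those avoiding the literal `some (a j)` in every
coordinate, i.e. the points of the box with that literal removed from every side, which has
`1 * 2 ^ (n - 1)` points.
-/

open Finset

theorem Fintype.card_filter_piFinset_exists_eq {ι : Type*} [Fintype ι] [DecidableEq ι]
    {β : ι → Type*} [∀ j, DecidableEq (β j)] (S : ∀ j, Finset (β j)) (x : ∀ j, β j)
    (hx : ∀ j, x j ∈ S j) :
    #{f ∈ piFinset S | ∃ j, f j = x j} = ∏ j, #(S j) - ∏ j, (#(S j) - 1) := by
  have hsplit : {f ∈ piFinset S | ∃ j, f j = x j}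
      = piFinset S \ piFinset fun j => (S j).erase (x j) := by
    ext f
    simp only [mem_filter, mem_sdiff, mem_piFinset, mem_erase]
    grind
  rw [hsplit, card_sdiff_of_subset (piFinset_subset _ _ fun j => erase_subset _ _),
    card_piFinset, card_piFinset]
  simp only [card_erase_of_mem (hx _)]

theorem Fintype.prod_update_const {ι M : Type*} [Fintype ι] [DecidableEq ι] [CommMonoid M]
    (i : ι) (a b : M) : ∏ j, Function.update (fun _ => a) i b j = b * a ^ (card ι - 1) := by
  rw [prod_update_of_mem (mem_univ i), prod_const, ← compl_eq_univ_sdiff, card_compl,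
    card_singleton]

theorem satisfied_with_variable_count_general (n : ℕ)
    (a : Fin n → Bool) (i : Fin n) :
    Fintype.card {c : Fin n → Option Bool //
        c ≠ (fun _ => none) ∧ c i ≠ none ∧ ∃ j, c j = some (a j)}
      = 2 * 3 ^ (n - 1) - 2 ^ (n - 1) := by
  set S : Fin n → Finset (Option Bool) := Function.update (fun _ => univ) i (univ.erase none)
  have hS : ∀ c, c ∈ Fintype.piFinset S ↔ c i ≠ none := by
    simp [S, Fintype.piFinset_update_eq_filter_piFinset_mem]
  have hsat : ∀ j, some (a j) ∈ S j := by
    intro j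
    by_cases h : j = i <;> simp [S, h]
  have hcard : ∀ j, #(S j) = Function.update (fun _ => 3) i 2 j := by
    intro j
    by_cases h : j = i <;> simp [S, h]
  have hcard' : ∀ j, #(S j) - 1 = Function.update (fun _ => 2) i 1 j := by
    intro j
    by_cases h : j = i <;> simp [hcard, h]
  have hclauses : ({c | c ≠ (fun _ => none) ∧ c i ≠ none ∧ ∃ j, c j = some (a j)} : Finset _)
      = {c ∈ Fintype.piFinset S | ∃ j, c j = some (a j)} := by
    ext c
    simp only [mem_filter, mem_univ, true_and, hS]
    exact ⟨fun h => h.2, fun h => ⟨fun hc => h.1 (by simp [hc]), h⟩⟩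
  calc _ = #{c ∈ Fintype.piFinset S | ∃ j, c j = some (a j)} := by
        rw [Fintype.card_subtype, hclauses]
    _ = ∏ j, #(S j) - ∏ j, (#(S j) - 1) := by
        convert Fintype.card_filter_piFinset_exists_eq S _ hsat
    _ = 2 * 3 ^ (n - 1) - 2 ^ (n - 1) := by
        rw [Fintype.prod_congr _ _ hcard', Fintype.prod_congr _ _ hcard,
          Fintype.prod_update_const, Fintype.prod_update_const, Fintype.card_fin, one_mul]

/-- For `n ≥ 1`, any assignment `a` and any variable index `i`, the number of clauses
over `n` variables containing variable `i` (in either polarity) and satisfied by `a`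
is exactly `2·3^(n-1) - 2^(n-1)`. -/
theorem satisfied_with_variable_count (n : ℕ) (hn : 1 ≤ n)
    (a : Fin n → Bool) (i : Fin n) :
    Fintype.card {c : Fin n → Option Bool //
        c ≠ (fun _ => none) ∧ c i ≠ none ∧ ∃ j, c j = some (a j)}
      = 2 * 3 ^ (n - 1) - 2 ^ (n - 1) :=
  satisfied_with_variable_count_general n a i
end

section
/- For every natural number n and every truth assignment a : Fin n → Bool, every variable index i : Fin n, and every polarity b : Bool with b = a i, the number of clauses over n Boolean variables that contain the literal (i, b) and are satisfied by a is exactly 3^(n-1), while the number of clauses containing the complementary literal (i, ¬b) satisfied by a is exactly 3^(n-1) - 2^(n-1). -/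
/-!
Fixing `c i` leaves the other `n - 1` coordinates free, each with three values. If
`c i = some (a i)`, the clause is already satisfied at `i`. If `c i = some (!a i)`, it is
satisfied exactly when it agrees with `a` at some `j ≠ i`, and the clauses that do not are those
where each `c j` avoids `some (a j)`, with two values left per coordinate: `2 ^ (n - 1)` of them.
-/

open Fintype

section

variable {κ β : Type*} [Fintype κ] [DecidableEq κ] [Fintype β] [DecidableEq β]

theorem Fintype.card_subtype_forall_ne (g₀ : κ → β) :
    card {g : κ → β // ∀ j, g j ≠ g₀ j} = (card β - 1) ^ card κ := by
  rw [card_congr (Equiv.subtypePiEquivPi (p := fun j x => x ≠ g₀ j)), card_pi]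
  simp [card_subtype_compl]

theorem Fintype.card_subtype_exists_eq (g₀ : κ → β) :
    card {g : κ → β // ∃ j, g j = g₀ j} = card β ^ card κ - (card β - 1) ^ card κ := by
  have hcompl := card_subtype_compl fun g : κ → β => ∃ j, g j = g₀ j
  simp only [not_exists, ← ne_eq, card_fun] at hcompl
  rw [card_subtype_forall_ne] at hcompl
  have hle := card_subtype_le fun g : κ → β => ∃ j, g j = g₀ j
  rw [card_fun] at hle
  omega

end

section

variable {ι α : Type*} [Fintype ι] [DecidableEq ι] [Fintype α] [DecidableEq α]

theorem Fintype.card_subtype_apply_eq_and (i : ι) (y : α)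
    (Q : ({j // j ≠ i} → α) → Prop) [DecidablePred Q] :
    card {f : ι → α // f i = y ∧ Q (fun j => f j)} = card {g : {j // j ≠ i} → α // Q g} := by
  let e : {f : ι → α // f i = y ∧ Q (fun j => f j)} ≃
      {p : α × ({j // j ≠ i} → α) // p.1 = y ∧ Q p.2} :=
    (Equiv.funSplitAt i α).subtypeEquiv fun _ => Iff.rfl
  rw [card_congr (e.trans (Equiv.subtypeProdEquivProd (p := (· = y)) (q := Q))), card_prod,
    card_subtype_eq, one_mul]

theorem Fintype.card_subtype_apply_eq (i : ι) (y : α) :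
    card {f : ι → α // f i = y} = card α ^ (card ι - 1) := by
  simpa using card_subtype_apply_eq_and i y fun _ => True

end

theorem satisfied_with_literal_count_general (n : ℕ)
    (a : Fin n → Bool) (i : Fin n) (b : Bool) (hb : b = a i) :
    Fintype.card {c : Fin n → Option Bool //
        c ≠ (fun _ => none) ∧ c i = some b ∧ ∃ j, c j = some (a j)} = 3 ^ (n - 1) ∧
    Fintype.card {c : Fin n → Option Bool //
        c ≠ (fun _ => none) ∧ c i = some (!b) ∧ ∃ j, c j = some (a j)}
      = 3 ^ (n - 1) - 2 ^ (n - 1) := by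
  subst hb
  constructor
  · have hiff : ∀ c : Fin n → Option Bool,
        (c ≠ (fun _ => none) ∧ c i = some (a i) ∧ ∃ j, c j = some (a j)) ↔ c i = some (a i) :=
      fun c => ⟨fun h => h.2.1, fun h => ⟨fun hc => by simp [hc] at h, h, i, h⟩⟩
    rw [card_congr (Equiv.subtypeEquivRight hiff), card_subtype_apply_eq]
    simp
  · have hiff : ∀ c : Fin n → Option Bool,
        (c ≠ (fun _ => none) ∧ c i = some (!a i) ∧ ∃ j, c j = some (a j)) ↔
          c i = some (!a i) ∧ ∃ j : {j // j ≠ i}, c j = some (a j) := by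
      refine fun c => ⟨fun ⟨_, hi, j, hj⟩ => ⟨hi, ⟨j, ?_⟩, hj⟩,
        fun ⟨hi, j, hj⟩ => ⟨fun hc => by simp [hc] at hi, hi, j, hj⟩⟩
      rintro rfl
      simp [hi] at hj
    rw [card_congr (Equiv.subtypeEquivRight hiff),
      card_subtype_apply_eq_and i _ fun g => ∃ j, g j = some (a j), card_subtype_exists_eq]
    simp

/-- For `n ≥ 1`, an assignment `a`, a variable `i`, and the polarity `b = a i`:
exactly `3^(n-1)` clauses contain the literal `(i, b)` and are satisfied by `a`,
while exactly `3^(n-1) - 2^(n-1)` clauses contain the complementary literal `(i, ¬b)`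
and are satisfied by `a`. -/
theorem satisfied_with_literal_count (n : ℕ) (hn : 1 ≤ n)
    (a : Fin n → Bool) (i : Fin n) (b : Bool) (hb : b = a i) :
    Fintype.card {c : Fin n → Option Bool //
        c ≠ (fun _ => none) ∧ c i = some b ∧ ∃ j, c j = some (a j)} = 3 ^ (n - 1) ∧
    Fintype.card {c : Fin n → Option Bool //
        c ≠ (fun _ => none) ∧ c i = some (!b) ∧ ∃ j, c j = some (a j)}
      = 3 ^ (n - 1) - 2 ^ (n - 1) :=
  satisfied_with_literal_count_general n a i b hb
end
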